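/- arXiv:2505.09199 — 4 statements merged into one kernel-verified Lean document; each statement's English description precedes it below -/
import Mathlib

section
/- Assume μ > 4 and θ ∈ (θ_*(μ), θ^*(μ)). Then the equation S(x) = x has exactly three real solutions x_d < x_m < x_u, and they satisfy x_d ∈ (0, x_*(μ)), x_m ∈ (x_*(μ), x^*(μ)) and x_u ∈ (x^*(μ), 1). -/
/-- The sigmoid nonlinearity `S(x) = 1/(1 + exp(-μ(x - θ)))`. -/
noncomputable def sigmoid (μ θ x : ℝ) : ℝ := 1 / (1 + Real.exp (-μ * (x - θ)))

/-- The function `f(x) = x + (1/μ)·ln((1−x)/x)`. -/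
noncomputable def fmu (μ x : ℝ) : ℝ := x + (1 / μ) * Real.log ((1 - x) / x)

/-- `x_*(μ) = 1/2 − √(1/4 − 1/μ)`. -/
noncomputable def xlow (μ : ℝ) : ℝ := 1 / 2 - Real.sqrt (1 / 4 - 1 / μ)

/-- `x^*(μ) = 1/2 + √(1/4 − 1/μ)`. -/
noncomputable def xhigh (μ : ℝ) : ℝ := 1 / 2 + Real.sqrt (1 / 4 - 1 / μ)

/-- `θ_*(μ) = f(x_*(μ))`. -/
noncomputable def thetalow (μ : ℝ) : ℝ := fmu μ (xlow μ)

/-- `θ^*(μ) = f(x^*(μ))`. -/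
noncomputable def thetahigh (μ : ℝ) : ℝ := fmu μ (xhigh μ)

/-!
On `(0, 1)` the fixed points of `S` are exactly the solutions of `f(x) = θ`. Since
`f'(x) = (x(1-x) - 1/μ) / (x(1-x))` and `x(1-x) - 1/μ = -(x - x_*)(x - x^*)`, the function `f`
decreases from `+∞` (at `0⁺`) to `θ_*`, increases to `θ^*`, and decreases again to `-∞`
(at `1⁻`, by the symmetry `f(1-x) = 1 - f(x)`). Each of these three strictly monotone branches
takes the value `θ ∈ (θ_*, θ^*)` exactly once.
-/

open Set Filter Topology

section

variable {μ θ x : ℝ}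

lemma sigmoid_mem_Ioo : sigmoid μ θ x ∈ Ioo 0 1 := by
  have hE := Real.exp_pos (-μ * (x - θ))
  unfold sigmoid
  exact ⟨by positivity, by rw [div_lt_one (by positivity)]; linarith⟩

lemma sigmoid_eq_self_iff_fmu_eq (hμ : μ ≠ 0) (hx : x ∈ Ioo 0 1) :
    sigmoid μ θ x = x ↔ fmu μ x = θ := by
  obtain ⟨hx0, hx1⟩ := hx
  have hq : 0 < (1 - x) / x := div_pos (by linarith) hx0
  calc sigmoid μ θ x = x
      ↔ Real.exp (-μ * (x - θ)) = Real.exp (Real.log ((1 - x) / x)) := by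
        rw [Real.exp_log hq, sigmoid, div_eq_iff (by positivity), eq_div_iff hx0.ne']
        constructor <;> intro h <;> linarith
    _ ↔ fmu μ x = θ := by
        rw [Real.exp_eq_exp, fmu]
        constructor <;> intro h
        · rw [← h]; field_simp; ring
        · field_simp at h; linarith

lemma sigmoid_eq_self_iff (hμ : μ ≠ 0) :
    sigmoid μ θ x = x ↔ x ∈ Ioo 0 1 ∧ fmu μ x = θ :=
  ⟨fun h ↦ have hx := h ▸ sigmoid_mem_Ioo; ⟨hx, (sigmoid_eq_self_iff_fmu_eq hμ hx).mp h⟩,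
    fun ⟨hx, h⟩ ↦ (sigmoid_eq_self_iff_fmu_eq hμ hx).mpr h⟩

lemma hasDerivAt_fmu (hx : x ∈ Ioo 0 1) :
    HasDerivAt (fmu μ) ((x * (1 - x) - 1 / μ) / (x * (1 - x))) x := by
  obtain ⟨hx0, hx1⟩ := hx
  have hq : (1 - x) / x ≠ 0 := (div_pos (by linarith) hx0).ne'
  have h : HasDerivAt (fun y ↦ y + 1 / μ * Real.log ((1 - y) / y))
      (1 + 1 / μ * ((-1 * x - (1 - x) * 1) / x ^ 2 / ((1 - x) / x))) x :=
    (hasDerivAt_id' x).add <| ((((hasDerivAt_id' x).const_sub 1).div (hasDerivAt_id' x)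
      hx0.ne').log hq).const_mul _
  have : 1 - x ≠ 0 := by linarith
  exact h.congr_deriv (by field_simp; ring)

lemma continuousOn_fmu : ContinuousOn (fmu μ) (Ioo 0 1) :=
  fun _ hx ↦ (hasDerivAt_fmu hx).continuousAt.continuousWithinAt

lemma strictMonoOn_fmu {D : Set ℝ} (hD : Convex ℝ D) (hD01 : D ⊆ Ioo 0 1)
    (h : ∀ x ∈ interior D, 1 / μ < x * (1 - x)) : StrictMonoOn (fmu μ) D := by
  refine strictMonoOn_of_deriv_pos hD (continuousOn_fmu.mono hD01) fun x hx ↦ ?_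
  obtain ⟨hx0, hx1⟩ := hD01 (interior_subset hx)
  rw [(hasDerivAt_fmu ⟨hx0, hx1⟩).deriv]
  exact div_pos (by linarith [h x hx]) (mul_pos hx0 (by linarith))

lemma strictAntiOn_fmu {D : Set ℝ} (hD : Convex ℝ D) (hD01 : D ⊆ Ioo 0 1)
    (h : ∀ x ∈ interior D, x * (1 - x) < 1 / μ) : StrictAntiOn (fmu μ) D := by
  refine strictAntiOn_of_deriv_neg hD (continuousOn_fmu.mono hD01) fun x hx ↦ ?_
  obtain ⟨hx0, hx1⟩ := hD01 (interior_subset hx)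
  rw [(hasDerivAt_fmu ⟨hx0, hx1⟩).deriv]
  exact div_neg_of_neg_of_pos (by linarith [h x hx]) (mul_pos hx0 (by linarith))

lemma tendsto_fmu_nhdsGT_zero (hμ : 0 < μ) : Tendsto (fmu μ) (𝓝[>] 0) atTop := by
  have hq : Tendsto (fun x : ℝ ↦ (1 - x) * x⁻¹) (𝓝[>] 0) atTop :=
    (tendsto_nhdsWithin_of_tendsto_nhds
      ((by fun_prop : Continuous fun x : ℝ ↦ 1 - x).tendsto 0)).pos_mul_atTop (by norm_num)
      tendsto_inv_nhdsGT_zero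
  exact (tendsto_nhdsWithin_of_tendsto_nhds continuous_id.continuousAt).add_atTop
    ((Real.tendsto_log_atTop.comp hq).const_mul_atTop (by positivity))

lemma fmu_one_sub (μ x : ℝ) : fmu μ (1 - x) = 1 - fmu μ x := by
  rw [fmu, fmu, sub_sub_cancel, ← inv_div (1 - x), Real.log_inv]
  ring

lemma exists_mem_Ioo_fmu_eq_of_fmu_lt (hμ : 0 < μ) {c : ℝ} (hc : c ∈ Ioo 0 1)
    (hθ : fmu μ c < θ) : ∃ x ∈ Ioo 0 c, fmu μ x = θ := by
  obtain ⟨a, hθa, ha⟩ := ((tendsto_fmu_nhdsGT_zero hμ).eventually_gt_atTop θ |>.and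
    (Ioo_mem_nhdsGT hc.1)).exists
  obtain ⟨x, hx, hfx⟩ := intermediate_value_Ioo' ha.2.le
    (continuousOn_fmu.mono (Icc_subset_Ioo ha.1 hc.2)) ⟨hθ, hθa⟩
  exact ⟨x, ⟨ha.1.trans hx.1, hx.2⟩, hfx⟩

lemma exists_mem_Ioo_fmu_eq_of_lt_fmu (hμ : 0 < μ) {c : ℝ} (hc : c ∈ Ioo 0 1)
    (hθ : θ < fmu μ c) : ∃ x ∈ Ioo c 1, fmu μ x = θ := by
  obtain ⟨x, ⟨hx0, hxc⟩, hfx⟩ := exists_mem_Ioo_fmu_eq_of_fmu_lt (θ := 1 - θ) hμ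
    (c := 1 - c) ⟨by linarith [hc.2], by linarith [hc.1]⟩ (by rw [fmu_one_sub]; linarith)
  exact ⟨1 - x, ⟨by linarith, by linarith⟩, by rw [fmu_one_sub, hfx]; ring⟩

lemma one_sub_xlow (μ : ℝ) : 1 - xlow μ = xhigh μ := by
  rw [xlow, xhigh]; ring

lemma xlow_pos (hμ : 0 < μ) : 0 < xlow μ := by
  rw [xlow, sub_pos, Real.sqrt_lt' (by norm_num)]
  have : 0 < 1 / μ := by positivity
  linarith

lemma xhigh_lt_one (hμ : 0 < μ) : xhigh μ < 1 := by
  linarith [one_sub_xlow μ, xlow_pos hμ]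

lemma xlow_lt_xhigh (hμ : 4 < μ) : xlow μ < xhigh μ := by
  have : 1 / μ < 1 / 4 := one_div_lt_one_div_of_lt (by norm_num) hμ
  have := Real.sqrt_pos.mpr (sub_pos.mpr this)
  rw [xlow, xhigh]
  linarith

lemma mul_one_sub_sub_one_div_eq (hμ : 4 ≤ μ) (x : ℝ) :
    x * (1 - x) - 1 / μ = -((x - xlow μ) * (x - xhigh μ)) := by
  have : 1 / μ ≤ 1 / 4 := one_div_le_one_div_of_le (by norm_num) hμ
  have := Real.sq_sqrt (sub_nonneg.mpr this)
  rw [xlow, xhigh]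
  linear_combination -this

lemma strictAntiOn_fmu_Ioc_xlow (hμ : 4 < μ) : StrictAntiOn (fmu μ) (Ioc 0 (xlow μ)) := by
  refine strictAntiOn_fmu (convex_Ioc _ _)
    (Ioc_subset_Ioo_right ((xlow_lt_xhigh hμ).trans (xhigh_lt_one (by linarith))))
    fun x hx ↦ ?_
  rw [interior_Ioc] at hx
  linarith [mul_one_sub_sub_one_div_eq hμ.le x,
    mul_pos (sub_pos.2 hx.2) (sub_pos.2 (hx.2.trans (xlow_lt_xhigh hμ)))]

lemma strictMonoOn_fmu_Icc_xlow_xhigh (hμ : 4 < μ) :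
    StrictMonoOn (fmu μ) (Icc (xlow μ) (xhigh μ)) := by
  refine strictMonoOn_fmu (convex_Icc _ _)
    (Icc_subset_Ioo (xlow_pos (by linarith)) (xhigh_lt_one (by linarith))) fun x hx ↦ ?_
  rw [interior_Icc] at hx
  linarith [mul_one_sub_sub_one_div_eq hμ.le x, mul_pos (sub_pos.2 hx.1) (sub_pos.2 hx.2)]

lemma strictAntiOn_fmu_Ico_xhigh (hμ : 4 < μ) : StrictAntiOn (fmu μ) (Ico (xhigh μ) 1) := by
  refine strictAntiOn_fmu (convex_Ico _ _)
    (Ico_subset_Ioo_left ((xlow_pos (by linarith)).trans (xlow_lt_xhigh hμ)))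
    fun x hx ↦ ?_
  rw [interior_Ico] at hx
  linarith [mul_one_sub_sub_one_div_eq hμ.le x,
    mul_pos (sub_pos.2 hx.1) (sub_pos.2 ((xlow_lt_xhigh hμ).trans hx.1))]

end

/-- Assume `μ > 4` and `θ ∈ (θ_*(μ), θ^*(μ))`. Then the equation
`S(x) = x` has exactly three real solutions `x_d < x_m < x_u`, with
`x_d ∈ (0, x_*(μ))`, `x_m ∈ (x_*(μ), x^*(μ))` and `x_u ∈ (x^*(μ), 1)`. -/
theorem stmt_6 (μ θ : ℝ) (hμ : 4 < μ) (hθ : θ ∈ Set.Ioo (thetalow μ) (thetahigh μ)) :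
    ∃ xd xm xu : ℝ, xd < xm ∧ xm < xu ∧
      sigmoid μ θ xd = xd ∧ sigmoid μ θ xm = xm ∧ sigmoid μ θ xu = xu ∧
      xd ∈ Set.Ioo 0 (xlow μ) ∧ xm ∈ Set.Ioo (xlow μ) (xhigh μ) ∧
      xu ∈ Set.Ioo (xhigh μ) 1 ∧
      (∀ x : ℝ, sigmoid μ θ x = x → x = xd ∨ x = xm ∨ x = xu) := by
  have hμ0 : 0 < μ := by linarith
  obtain ⟨hlow, hhigh⟩ : fmu μ (xlow μ) < θ ∧ θ < fmu μ (xhigh μ) := hθ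
  have h0 := xlow_pos hμ0
  have h1 := xlow_lt_xhigh hμ
  have h2 := xhigh_lt_one hμ0
  obtain ⟨xd, hxd, hfxd⟩ := exists_mem_Ioo_fmu_eq_of_fmu_lt hμ0 ⟨h0, h1.trans h2⟩ hlow
  obtain ⟨xm, hxm, hfxm⟩ := intermediate_value_Ioo h1.le
    (continuousOn_fmu.mono (Icc_subset_Ioo h0 h2)) ⟨hlow, hhigh⟩
  obtain ⟨xu, hxu, hfxu⟩ := exists_mem_Ioo_fmu_eq_of_lt_fmu hμ0 ⟨h0.trans h1, h2⟩ hhigh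
  have hfix {x : ℝ} (hx : x ∈ Ioo 0 1) := sigmoid_eq_self_iff_fmu_eq (θ := θ) hμ0.ne' hx
  refine ⟨xd, xm, xu, hxd.2.trans hxm.1, hxm.2.trans hxu.1,
    (hfix ⟨hxd.1, by linarith [hxd.2]⟩).mpr hfxd,
    (hfix ⟨by linarith [hxm.1], by linarith [hxm.2]⟩).mpr hfxm,
    (hfix ⟨by linarith [hxu.1], hxu.2⟩).mpr hfxu, hxd, hxm, hxu, fun x hx ↦ ?_⟩
  obtain ⟨⟨hx0, hx1⟩, hfx⟩ := (sigmoid_eq_self_iff hμ0.ne').mp hx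
  rcases lt_or_ge x (xlow μ) with hxl | hxl
  · exact .inl <| (strictAntiOn_fmu_Ioc_xlow hμ).injOn ⟨hx0, hxl.le⟩ ⟨hxd.1, hxd.2.le⟩
      (hfx.trans hfxd.symm)
  rcases le_or_gt x (xhigh μ) with hxh | hxh
  · exact .inr <| .inl <| (strictMonoOn_fmu_Icc_xlow_xhigh hμ).injOn ⟨hxl, hxh⟩
      (Ioo_subset_Icc_self hxm) (hfx.trans hfxm.symm)
  · exact .inr <| .inr <| (strictAntiOn_fmu_Ico_xhigh hμ).injOn ⟨hxh.le, hx1⟩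
      ⟨hxu.1.le, hxu.2⟩ (hfx.trans hfxu.symm)
end

section
/- Assume 0 ≤ p < 4/(4+μ) and define F_p(x) = (−x + S(x))·(1 − p − p·S'(x)). Then for every real x, F_p(x) = 0 if and only if S(x) = x; that is, the stationary homogeneous solutions are exactly the fixed points of S. -/
/-- `F_p(x) = (−x + S(x))·(1 − p − p·S'(x))`. -/
noncomputable def Fp (μ θ p x : ℝ) : ℝ :=
  (-x + sigmoid μ θ x) * (1 - p - p * deriv (sigmoid μ θ) x)

lemma mul_one_sub_le_one_div_four (a : ℝ) : a * (1 - a) ≤ 1 / 4 := by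
  nlinarith [sq_nonneg (a - 1 / 2)]

section Sigmoid

variable (μ θ : ℝ)

lemma sigmoid_eq_real_sigmoid (x : ℝ) : sigmoid μ θ x = Real.sigmoid (μ * (x - θ)) := by
  rw [sigmoid, Real.sigmoid_def, one_div, neg_mul]

lemma hasDerivAt_sigmoid_affine (x : ℝ) :
    HasDerivAt (sigmoid μ θ) (μ * (sigmoid μ θ x * (1 - sigmoid μ θ x))) x := by
  have hlin : HasDerivAt (fun y => μ * (y - θ)) μ x := by
    simpa using ((hasDerivAt_id x).sub_const θ).const_mul μ
  rw [funext (sigmoid_eq_real_sigmoid μ θ), mul_comm]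
  exact (Real.hasDerivAt_sigmoid _).comp x hlin

lemma deriv_sigmoid_affine (x : ℝ) :
    deriv (sigmoid μ θ) x = μ * (sigmoid μ θ x * (1 - sigmoid μ θ x)) :=
  (hasDerivAt_sigmoid_affine μ θ x).deriv

variable {μ}

lemma deriv_sigmoid_affine_nonneg (hμ : 0 ≤ μ) (x : ℝ) : 0 ≤ deriv (sigmoid μ θ) x := by
  rw [deriv_sigmoid_affine, sigmoid_eq_real_sigmoid]
  exact mul_nonneg hμ (mul_nonneg (Real.sigmoid_nonneg _) (sub_nonneg.mpr (Real.sigmoid_le_one _)))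

lemma deriv_sigmoid_affine_le (hμ : 0 ≤ μ) (x : ℝ) : deriv (sigmoid μ θ) x ≤ μ / 4 := by
  rw [deriv_sigmoid_affine, div_eq_mul_one_div]
  exact mul_le_mul_of_nonneg_left (mul_one_sub_le_one_div_four _) hμ

end Sigmoid

lemma one_sub_sub_mul_pos {μ p d : ℝ} (hμ : 0 ≤ μ) (hd0 : 0 ≤ d) (hd : d ≤ μ / 4)
    (hp : p < 4 / (4 + μ)) : 0 < 1 - p - p * d := by
  rcases le_or_gt p 0 with hp0 | hp0
  · nlinarith
  · have hp' : p * (4 + μ) < 4 := (lt_div_iff₀ (by linarith)).mp hp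
    nlinarith

theorem stmt_10_general (μ θ p : ℝ) (hμ : 0 < μ)
    (hp : p < 4 / (4 + μ)) :
    ∀ x : ℝ, Fp μ θ p x = 0 ↔ sigmoid μ θ x = x := by
  intro x
  have hfactor : 1 - p - p * deriv (sigmoid μ θ) x ≠ 0 :=
    (one_sub_sub_mul_pos hμ.le (deriv_sigmoid_affine_nonneg θ hμ.le x)
      (deriv_sigmoid_affine_le θ hμ.le x) hp).ne'
  rw [Fp, mul_eq_zero, or_iff_left hfactor, neg_add_eq_sub, sub_eq_zero]

/-- Assume `0 ≤ p < 4/(4+μ)`. Then for every real `x`, `F_p(x) = 0` if and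
only if `S(x) = x`; the stationary homogeneous solutions are exactly the fixed points of
`S`. -/
theorem stmt_10 (μ θ p : ℝ) (hμ : 0 < μ) (hθ : 0 ≤ θ)
    (hp0 : 0 ≤ p) (hp : p < 4 / (4 + μ)) :
    ∀ x : ℝ, Fp μ θ p x = 0 ↔ sigmoid μ θ x = x :=
  stmt_10_general μ θ p hμ hp
end

section
/- (Invariance of the interval between two stationary states, semi-infinite network.) Let a ≤ b be real numbers with S(a) = a and S(b) = b. Let v : [0,∞) → ℝ^ℕ be such that for each j ∈ ℕ the map t ↦ v_j(t) is continuously differentiable and uniformly bounded, satisfying v_j'(t) = 𝒩(v_{j−1}(t), v_j(t), v_{j+1}(t)) for all t > 0 and j ≥ 1. If v_0(t) ∈ [a, b] for all t ≥ 0 and v_j(0) ∈ [a, b] for all j ≥ 1, then v_j(t) ∈ [a, b] for all t > 0 and all j ≥ 1. -/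
/-- The nonlinearity
`𝒩(u,v,w) = (1−p−q)·(S(u) − v) + p·S'(v)·(u − S(v)) + q·(S(w) − v)`. -/
noncomputable def Nfun (μ θ p q u v w : ℝ) : ℝ :=
  (1 - p - q) * (sigmoid μ θ u - v)
    + p * deriv (sigmoid μ θ) v * (u - sigmoid μ θ v)
    + q * (sigmoid μ θ w - v)

open Set

lemma sigmoid_eq_comp (μ θ : ℝ) : sigmoid μ θ = fun x => Real.sigmoid (μ * (x - θ)) := by
  ext x
  rw [sigmoid, Real.sigmoid_def, one_div, neg_mul]

lemma sigmoid_differentiable (μ θ : ℝ) : Differentiable ℝ (sigmoid μ θ) := by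
  rw [sigmoid_eq_comp]
  fun_prop

lemma deriv_sigmoid_mem_Icc {μ : ℝ} (hμ : 0 ≤ μ) (θ x : ℝ) :
    deriv (sigmoid μ θ) x ∈ Icc 0 (μ / 4) := by
  set s := Real.sigmoid (μ * (x - θ))
  have hderiv : HasDerivAt (sigmoid μ θ) (s * (1 - s) * μ) x := by
    rw [sigmoid_eq_comp]
    exact (Real.hasDerivAt_sigmoid _).comp x (((hasDerivAt_id x).sub_const θ).const_mul μ
      |>.congr_deriv (mul_one μ))
  have hs0 : 0 ≤ s := Real.sigmoid_nonneg _
  have hs1 : s ≤ 1 := Real.sigmoid_le_one _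
  rw [hderiv.deriv]
  constructor
  · have : 0 ≤ s * (1 - s) := mul_nonneg hs0 (by linarith)
    positivity
  · nlinarith [sq_nonneg (s - 1 / 2)]

/-- `Nfun` with the sigmoid replaced by an arbitrary nonlinearity `S`. -/
noncomputable def latticeField (S : ℝ → ℝ) (p q u v w : ℝ) : ℝ :=
  (1 - p - q) * (S u - v) + p * deriv S v * (u - S v) + q * (S w - v)

lemma deriv_neg_comp_neg (S : ℝ → ℝ) (x : ℝ) : deriv (fun y => -S (-y)) x = deriv S (-x) := by
  rw [deriv.fun_neg, deriv_comp_neg, neg_neg]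

lemma latticeField_neg_comp_neg (S : ℝ → ℝ) (p q u v w : ℝ) :
    latticeField (fun x => -S (-x)) p q (-u) (-v) (-w) = -latticeField S p q u v w := by
  simp only [latticeField, deriv_neg_comp_neg, neg_neg]
  ring

lemma latticeField_le {S : ℝ → ℝ} {L p q b β u w : ℝ} (hS : Differentiable ℝ S)
    (hS' : ∀ x, deriv S x ∈ Icc 0 L) (hp : 0 ≤ p) (hq : 0 ≤ q) (hpq : p + q ≤ 1)
    (hb : S b = b) (hβ : 0 ≤ β) (hu : u ≤ b + β) (hw : w ≤ b + 2 * β) :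
    latticeField S p q u (b + β) w ≤ 2 * L * β := by
  have hmono : Monotone S := monotone_of_deriv_nonneg hS fun x => (hS' x).1
  have hgrowth := image_sub_le_mul_sub_of_deriv_le hS fun x => (hS' x).2
  have hL : 0 ≤ L := (hS' 0).1.trans (hS' 0).2
  have hSu : S u ≤ b + L * β := by
    have := hgrowth (le_add_of_nonneg_right hβ : b ≤ b + β)
    linarith [hmono hu]
  have hSw : S w ≤ b + 2 * L * β := by
    have := hgrowth (by linarith : b ≤ b + 2 * β)
    linarith [hmono hw]
  have hSv : b ≤ S (b + β) := hb.symm.trans_le (hmono (le_add_of_nonneg_right hβ))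
  have hmid : deriv S (b + β) * (u - S (b + β)) ≤ L * β := by
    obtain ⟨hd0, hdL⟩ := hS' (b + β)
    rcases le_total (u - S (b + β)) 0 with h | h <;> nlinarith
  have h1 : (1 - p - q) * (S u - (b + β)) ≤ (1 - p - q) * (2 * L * β) :=
    mul_le_mul_of_nonneg_left (by nlinarith) (by linarith)
  have h2 : p * (deriv S (b + β) * (u - S (b + β))) ≤ p * (2 * L * β) :=
    mul_le_mul_of_nonneg_left (by nlinarith) hp
  have h3 : q * (S w - (b + β)) ≤ q * (2 * L * β) :=
    mul_le_mul_of_nonneg_left (by linarith) hq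
  rw [latticeField, mul_assoc p]
  linarith

lemma exists_first_zero {g : ℝ → ℝ} {t₁ : ℝ} (hg : ContinuousOn g (Icc 0 t₁)) (ht₁ : 0 ≤ t₁)
    (h0 : g 0 < 0) (h1 : 0 ≤ g t₁) : ∃ t₀ > 0, g t₀ = 0 ∧ ∀ t ∈ Ico 0 t₀, g t < 0 := by
  set Z := Icc 0 t₁ ∩ g ⁻¹' Ici 0
  have hZ : IsClosed Z := hg.preimage_isClosed_of_isClosed isClosed_Icc isClosed_Ici
  have hbdd : BddBelow Z := ⟨0, fun t ht => ht.1.1⟩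
  obtain ⟨⟨ht₀0, ht₀t₁⟩, hgt₀⟩ : sInf Z ∈ Z := hZ.csInf_mem ⟨t₁, ⟨ht₁, le_rfl⟩, h1⟩ hbdd
  have hbefore : ∀ t ∈ Ico 0 (sInf Z), g t < 0 := fun t ht => not_le.1 fun hgt =>
    (csInf_le hbdd ⟨⟨ht.1, ht.2.le.trans ht₀t₁⟩, hgt⟩).not_gt ht.2
  obtain ⟨s, hs, hgs⟩ := intermediate_value_Icc ht₀0 (hg.mono (Icc_subset_Icc_right ht₀t₁))
    ⟨h0.le, hgt₀⟩
  have hs_eq : s = sInf Z :=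
    hs.2.eq_or_lt.resolve_right fun hlt => (hbefore s ⟨hs.1, hlt⟩).ne hgs
  subst hs_eq
  refine ⟨_, ht₀0.lt_of_ne fun h => h0.ne (h ▸ hgs), hgs, hbefore⟩

lemma IsMaxOn.nonneg_of_hasDerivWithinAt_Icc {f : ℝ → ℝ} {f' a b : ℝ} (hab : a < b)
    (hmax : IsMaxOn f (Icc a b) b) (hf : HasDerivWithinAt f f' (Icc a b) b) : 0 ≤ f' := by
  have hcone : a - b ∈ posTangentConeAt (Icc a b) b :=
    sub_mem_posTangentConeAt_of_segment_subset (segment_symm ℝ b a ▸ segment_subset_Icc hab.le)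
  have := hmax.localize.hasFDerivWithinAt_nonpos hf.hasFDerivWithinAt hcone
  rw [ContinuousLinearMap.toSpanSingleton_apply, smul_eq_mul] at this
  nlinarith

lemma latticeField_solution_not_touch {S : ℝ → ℝ} {L p q b ε : ℝ} (hS : Differentiable ℝ S)
    (hS' : ∀ x, deriv S x ∈ Icc 0 L) (hp : 0 ≤ p) (hq : 0 ≤ q) (hpq : p + q ≤ 1)
    (hb : S b = b) (hε : 0 < ε) {v : ℝ → ℕ → ℝ} {v'ⱼ t₀ : ℝ} {j : ℕ} (ht₀ : 0 < t₀)
    (hv : HasDerivWithinAt (fun s => v s j) v'ⱼ (Ici 0) t₀)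
    (heq : v'ⱼ = latticeField S p q (v t₀ (j - 1)) (v t₀ j) (v t₀ (j + 1)))
    (hbelow : ∀ k, v t₀ k ≤ b + ε * 2 ^ k * Real.exp ((2 * L + 1) * t₀))
    (htouch : v t₀ j = b + ε * 2 ^ j * Real.exp ((2 * L + 1) * t₀))
    (hbefore : ∀ t ∈ Ico 0 t₀, v t j < b + ε * 2 ^ j * Real.exp ((2 * L + 1) * t)) :
    False := by
  set K := 2 * L + 1
  set β := ε * 2 ^ j * Real.exp (K * t₀) with hβ_def
  have hβ : 0 < β := by positivity
  have hgap : HasDerivWithinAt (fun t => v t j - (b + ε * 2 ^ j * Real.exp (K * t)))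
      (v'ⱼ - K * β) (Icc 0 t₀) t₀ := by
    have hexp : HasDerivAt (fun t => b + ε * 2 ^ j * Real.exp (K * t)) (K * β) t₀ := by
      refine (((hasDerivAt_id' t₀).const_mul K).exp.const_mul (ε * 2 ^ j)).const_add b
        |>.congr_deriv ?_
      rw [hβ_def]
      ring
    exact (hv.mono Icc_subset_Ici_self).sub hexp.hasDerivWithinAt
  have hmax : IsMaxOn (fun t => v t j - (b + ε * 2 ^ j * Real.exp (K * t))) (Icc 0 t₀) t₀ := by
    refine isMaxOn_iff.2 fun t ht => ?_
    rcases ht.2.eq_or_lt with rfl | hlt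
    · exact le_rfl
    · rw [htouch]
      linarith [hbefore t ⟨ht.1, hlt⟩]
  have hgrow := hmax.nonneg_of_hasDerivWithinAt_Icc ht₀ hgap
  have hu : v t₀ (j - 1) ≤ b + β := by
    have h2 : (2 : ℝ) ^ (j - 1) ≤ 2 ^ j := pow_le_pow_right₀ one_le_two (Nat.sub_le j 1)
    have : ε * 2 ^ (j - 1) * Real.exp (K * t₀) ≤ β :=
      mul_le_mul_of_nonneg_right (mul_le_mul_of_nonneg_left h2 hε.le) (Real.exp_pos _).le
    linarith [hbelow (j - 1)]
  have hw : v t₀ (j + 1) ≤ b + 2 * β := by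
    have := hbelow (j + 1)
    rw [pow_succ] at this
    linarith
  have hN := latticeField_le hS hS' hp hq hpq hb hβ.le hu hw
  rw [← htouch, ← heq] at hN
  have : K * β = 2 * L * β + β := by ring
  linarith

lemma exists_lt_barrier_of_le {v : ℝ → ℕ → ℝ} {M b ε K : ℝ} (hε : 0 < ε) (hK : 0 ≤ K)
    (hM : ∀ t ∈ Ici (0 : ℝ), ∀ j, v t j ≤ M) :
    ∃ J, ∀ t ∈ Ici (0 : ℝ), ∀ j, J < j → v t j < b + ε * 2 ^ j * Real.exp (K * t) := by
  obtain ⟨J, hJ⟩ := pow_unbounded_of_one_lt ((M - b) / ε) one_lt_two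
  rw [div_lt_iff₀ hε] at hJ
  refine ⟨J, fun t ht j hj => ?_⟩
  have h2 : (2 : ℝ) ^ J ≤ 2 ^ j := pow_le_pow_right₀ one_le_two hj.le
  have he : 1 ≤ Real.exp (K * t) := Real.one_le_exp (mul_nonneg hK ht)
  have : ε * 2 ^ J ≤ ε * 2 ^ j * Real.exp (K * t) :=
    (mul_le_mul_of_nonneg_left h2 hε.le).trans (le_mul_of_one_le_right (by positivity) he)
  linarith [hM t ht j]

lemma latticeField_solution_lt_barrier {S : ℝ → ℝ} {L p q b M ε : ℝ}
    (hS : Differentiable ℝ S) (hS' : ∀ x, deriv S x ∈ Icc 0 L) (hp : 0 ≤ p) (hq : 0 ≤ q)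
    (hpq : p + q ≤ 1) (hb : S b = b) (hε : 0 < ε) {v v' : ℝ → ℕ → ℝ}
    (hv : ∀ j, ∀ t ∈ Ici (0 : ℝ), HasDerivWithinAt (fun s => v s j) (v' t j) (Ici 0) t)
    (hM : ∀ t ∈ Ici (0 : ℝ), ∀ j, v t j ≤ M)
    (heq : ∀ t > (0 : ℝ), ∀ j, 1 ≤ j →
      v' t j = latticeField S p q (v t (j - 1)) (v t j) (v t (j + 1)))
    (hbdry : ∀ t ∈ Ici (0 : ℝ), v t 0 ≤ b) (hinit : ∀ j, 1 ≤ j → v 0 j ≤ b) :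
    ∀ t ∈ Ici (0 : ℝ), ∀ j, v t j < b + ε * 2 ^ j * Real.exp ((2 * L + 1) * t) := by
  set K := 2 * L + 1
  set gap : ℕ → ℝ → ℝ := fun j t => v t j - (b + ε * 2 ^ j * Real.exp (K * t)) with hgap
  suffices h : ∀ t ∈ Ici (0 : ℝ), ∀ j, gap j t < 0 from
    fun t ht j => sub_neg.1 (h t ht j)
  have hL : 0 ≤ L := (hS' 0).1.trans (hS' 0).2
  have hpos : ∀ j t, 0 < ε * 2 ^ j * Real.exp (K * t) := fun j t => by positivity
  obtain ⟨J, hJ⟩ := exists_lt_barrier_of_le (b := b) (K := K) hε (by linarith) hM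
  have hfar : ∀ t ∈ Ici (0 : ℝ), ∀ j, J < j → gap j t < 0 :=
    fun t ht j hj => sub_neg.2 (hJ t ht j hj)
  have hzero : ∀ t ∈ Ici (0 : ℝ), gap 0 t < 0 := fun t ht => by
    simp only [hgap]
    linarith [hbdry t ht, hpos 0 t]
  have hinit' : ∀ j, gap j 0 < 0 := by
    rintro (_ | j)
    · exact hzero 0 self_mem_Ici
    · simp only [hgap]
      linarith [hinit (j + 1) j.succ_pos, hpos (j + 1) 0]
  by_contra! hcon
  obtain ⟨t₁, ht₁, j₁, hj₁⟩ := hcon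
  have hJ₁ : j₁ ∈ Finset.range (J + 1) :=
    Finset.mem_range_succ_iff.2 (not_lt.1 fun h => (hfar t₁ ht₁ j₁ h).not_ge hj₁)
  set g : ℝ → ℝ := fun t => (Finset.range (J + 1)).sup' Finset.nonempty_range_add_one (gap · t)
  have hg : ContinuousOn g (Icc 0 t₁) := by
    refine ContinuousOn.finset_sup'_apply _ fun j _ => ?_
    have hvj : ContinuousOn (fun t => v t j) (Icc 0 t₁) :=
      fun t ht => (hv j t ht.1).continuousWithinAt.mono Icc_subset_Ici_self
    exact hvj.sub (by fun_prop)
  obtain ⟨t₀, ht₀, hgt₀, hbefore⟩ := exists_first_zero hg ht₁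
    ((Finset.sup'_lt_iff _).2 fun j _ => hinit' j) (Finset.le_sup'_of_le _ hJ₁ hj₁)
  obtain ⟨j, hjJ, hgj⟩ := Finset.exists_mem_eq_sup' Finset.nonempty_range_add_one (gap · t₀)
  have hbelow : ∀ k, gap k t₀ ≤ 0 := by
    intro k
    rcases le_or_gt k J with hk | hk
    · exact hgt₀ ▸ Finset.le_sup' (gap · t₀) (Finset.mem_range_succ_iff.2 hk)
    · exact (hfar t₀ ht₀.le k hk).le
  have htouch : gap j t₀ = 0 := hgj.symm.trans hgt₀
  have hj : 1 ≤ j := Nat.one_le_iff_ne_zero.2 fun h0 =>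
    (hzero t₀ ht₀.le).ne (h0 ▸ htouch)
  refine latticeField_solution_not_touch hS hS' hp hq hpq hb hε ht₀ (hv j t₀ ht₀.le)
    (heq t₀ ht₀ j hj) (fun k => sub_nonpos.1 (hbelow k)) ?_ fun t ht => sub_neg.1 ?_
  · linarith [sub_eq_zero.1 htouch]
  · exact (Finset.le_sup' (gap · t) hjJ).trans_lt (hbefore t ht)

theorem latticeField_solution_le {S : ℝ → ℝ} {L p q b M : ℝ}
    (hS : Differentiable ℝ S) (hS' : ∀ x, deriv S x ∈ Icc 0 L) (hp : 0 ≤ p) (hq : 0 ≤ q)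
    (hpq : p + q ≤ 1) (hb : S b = b) {v v' : ℝ → ℕ → ℝ}
    (hv : ∀ j, ∀ t ∈ Ici (0 : ℝ), HasDerivWithinAt (fun s => v s j) (v' t j) (Ici 0) t)
    (hM : ∀ t ∈ Ici (0 : ℝ), ∀ j, v t j ≤ M)
    (heq : ∀ t > (0 : ℝ), ∀ j, 1 ≤ j →
      v' t j = latticeField S p q (v t (j - 1)) (v t j) (v t (j + 1)))
    (hbdry : ∀ t ∈ Ici (0 : ℝ), v t 0 ≤ b) (hinit : ∀ j, 1 ≤ j → v 0 j ≤ b) :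
    ∀ t ∈ Ici (0 : ℝ), ∀ j, v t j ≤ b := by
  intro t ht j
  refine le_of_forall_pos_lt_add fun δ hδ => ?_
  have hc : 0 < 2 ^ j * Real.exp ((2 * L + 1) * t) := by positivity
  have := latticeField_solution_lt_barrier hS hS' hp hq hpq hb (div_pos hδ hc) hv hM heq hbdry
    hinit t ht j
  rwa [mul_assoc, div_mul_cancel₀ _ hc.ne'] at this

theorem latticeField_solution_ge {S : ℝ → ℝ} {L p q a m : ℝ}
    (hS : Differentiable ℝ S) (hS' : ∀ x, deriv S x ∈ Icc 0 L) (hp : 0 ≤ p) (hq : 0 ≤ q)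
    (hpq : p + q ≤ 1) (ha : S a = a) {v v' : ℝ → ℕ → ℝ}
    (hv : ∀ j, ∀ t ∈ Ici (0 : ℝ), HasDerivWithinAt (fun s => v s j) (v' t j) (Ici 0) t)
    (hm : ∀ t ∈ Ici (0 : ℝ), ∀ j, m ≤ v t j)
    (heq : ∀ t > (0 : ℝ), ∀ j, 1 ≤ j →
      v' t j = latticeField S p q (v t (j - 1)) (v t j) (v t (j + 1)))
    (hbdry : ∀ t ∈ Ici (0 : ℝ), a ≤ v t 0) (hinit : ∀ j, 1 ≤ j → a ≤ v 0 j) :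
    ∀ t ∈ Ici (0 : ℝ), ∀ j, a ≤ v t j := by
  have hle := latticeField_solution_le (S := fun x => -S (-x)) (b := -a) (M := -m)
    (v := fun t j => -v t j) (v' := fun t j => -v' t j)
    (hS.comp differentiable_neg).neg (fun x => deriv_neg_comp_neg S x ▸ hS' (-x)) hp hq hpq
    (by simp [ha]) (fun j t ht => (hv j t ht).neg) (fun t ht j => neg_le_neg (hm t ht j))
    (fun t ht j hj => by simp only [heq t ht j hj, ← latticeField_neg_comp_neg])
    (fun t ht => neg_le_neg (hbdry t ht)) (fun j hj => neg_le_neg (hinit j hj))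
  exact fun t ht j => neg_le_neg_iff.1 (hle t ht j)

theorem stmt_18_general (μ θ p q : ℝ) (hμ : 0 < μ)
    (hp : 0 ≤ p) (hq0 : 0 ≤ q) (hpq : p + q ≤ 1)
    (a b : ℝ) (ha : sigmoid μ θ a = a) (hb : sigmoid μ θ b = b)
    (v v' : ℝ → ℕ → ℝ)
    -- componentwise continuously differentiable on [0,∞)
    (hv : ∀ j : ℕ, ∀ t ∈ Set.Ici (0 : ℝ),
      HasDerivWithinAt (fun s => v s j) (v' t j) (Set.Ici (0 : ℝ)) t)
    -- uniform bound
    (M : ℝ)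
    (hbound : ∀ t ∈ Set.Ici (0 : ℝ), ∀ j : ℕ, |v t j| ≤ M)
    -- the lattice equation for j ≥ 1
    (heq : ∀ t > (0 : ℝ), ∀ j : ℕ, 1 ≤ j →
      v' t j = Nfun μ θ p q (v t (j - 1)) (v t j) (v t (j + 1)))
    -- boundary datum
    (hbdry : ∀ t ∈ Set.Ici (0 : ℝ), v t 0 ∈ Set.Icc a b)
    -- initial datum
    (hinit : ∀ j : ℕ, 1 ≤ j → v 0 j ∈ Set.Icc a b) :
    ∀ t > (0 : ℝ), ∀ j : ℕ, 1 ≤ j → v t j ∈ Set.Icc a b := by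
  have hS := sigmoid_differentiable μ θ
  have hS' := deriv_sigmoid_mem_Icc hμ.le θ
  intro t ht j _
  exact ⟨latticeField_solution_ge hS hS' hp hq0 hpq ha hv
      (fun t ht j => (abs_le.1 (hbound t ht j)).1) heq (fun t ht => (hbdry t ht).1)
      (fun j hj => (hinit j hj).1) t ht.le j,
    latticeField_solution_le hS hS' hp hq0 hpq hb hv
      (fun t ht j => (abs_le.1 (hbound t ht j)).2) heq (fun t ht => (hbdry t ht).2)
      (fun j hj => (hinit j hj).2) t ht.le j⟩

/-- Invariance of the interval between two stationary states on the
semi-infinite network. If `a ≤ b` are fixed points of `S`, `v` is a componentwise `C¹`,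
uniformly bounded solution of the lattice equation for `j ≥ 1`, the boundary datum
satisfies `v_0(t) ∈ [a,b]` for all `t ≥ 0` and the initial datum satisfies
`v_j(0) ∈ [a,b]` for all `j ≥ 1`, then `v_j(t) ∈ [a,b]` for all `t > 0` and `j ≥ 1`. -/
theorem stmt_18 (μ θ p q : ℝ) (hμ : 0 < μ) (hθ : 0 ≤ θ)
    (hp : 0 ≤ p) (hq0 : 0 ≤ q) (hq1 : q ≤ 1) (hpq : p + q ≤ 1)
    (a b : ℝ) (hab : a ≤ b) (ha : sigmoid μ θ a = a) (hb : sigmoid μ θ b = b)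
    (v v' : ℝ → ℕ → ℝ)
    -- componentwise continuously differentiable on [0,∞)
    (hv : ∀ j : ℕ, ∀ t ∈ Set.Ici (0 : ℝ),
      HasDerivWithinAt (fun s => v s j) (v' t j) (Set.Ici (0 : ℝ)) t)
    (hv' : ∀ j : ℕ, ContinuousOn (fun t => v' t j) (Set.Ici (0 : ℝ)))
    -- uniform bound
    (M : ℝ) (hM : 0 < M)
    (hbound : ∀ t ∈ Set.Ici (0 : ℝ), ∀ j : ℕ, |v t j| ≤ M)
    -- the lattice equation for j ≥ 1
    (heq : ∀ t > (0 : ℝ), ∀ j : ℕ, 1 ≤ j →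
      v' t j = Nfun μ θ p q (v t (j - 1)) (v t j) (v t (j + 1)))
    -- boundary datum
    (hbdry : ∀ t ∈ Set.Ici (0 : ℝ), v t 0 ∈ Set.Icc a b)
    -- initial datum
    (hinit : ∀ j : ℕ, 1 ≤ j → v 0 j ∈ Set.Icc a b) :
    ∀ t > (0 : ℝ), ∀ j : ℕ, 1 ≤ j → v t j ∈ Set.Icc a b :=
  stmt_18_general μ θ p q hμ hp hq0 hpq a b ha hb v v' hv M hbound heq hbdry hinit
end

section
/- (Invariance of the interval between two stationary states, bi-infinite network.) Let a ≤ b be real numbers with S(a) = a and S(b) = b. Let v : [0,∞) → ℝ^ℤ be such that for each j ∈ ℤ the map t ↦ v_j(t) is continuously differentiable and uniformly bounded, satisfying v_j'(t) = 𝒩(v_{j−1}(t), v_j(t), v_{j+1}(t)) for all t > 0 and j ∈ ℤ. If v_j(0) ∈ [a, b] for all j ∈ ℤ, then v_j(t) ∈ [a, b] for all t > 0 and all j ∈ ℤ. -/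
/-!
Whenever `v_j(t) ≥ b`, the monotonicity of `S`, `S(b) = b` and `0 ≤ S' ≤ μ/4` give
`v_j'(t) ≤ (μ/4)·E`, where `E ≥ 0` bounds every excess `v_k(t) - b`. Measuring from the last
time a component was `≤ b`, the mean value theorem shows that on a time window of length `T`
the excess over `b` is at most `(μ/4)·T` times the largest excess in the window. With
`(μ/4)·T < 1` iterating this contraction forces the excess to vanish, and marching window by
window covers `[0, ∞)`. The lower bound is the upper bound for `1 - v`: the reflection
`x ↦ 1 - x`, `θ ↦ 1 - θ` maps `S` to itself and `𝒩` to `-𝒩`.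
-/

open Set

theorem sigmoid_eq (μ θ x : ℝ) : sigmoid μ θ x = Real.sigmoid (μ * (x - θ)) := by
  simp [sigmoid, Real.sigmoid_def, neg_mul]

theorem hasDerivAt_sigmoid (μ θ x : ℝ) :
    HasDerivAt (sigmoid μ θ)
      (μ * (Real.sigmoid (μ * (x - θ)) * (1 - Real.sigmoid (μ * (x - θ))))) x := by
  rw [funext (sigmoid_eq μ θ)]
  exact ((Real.hasDerivAt_sigmoid _).comp x
    (((hasDerivAt_id' x).sub_const θ).const_mul μ)).congr_deriv (by ring)

theorem deriv_sigmoid_nonneg {μ : ℝ} (hμ : 0 ≤ μ) (θ x : ℝ) : 0 ≤ deriv (sigmoid μ θ) x := by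
  rw [(hasDerivAt_sigmoid μ θ x).deriv]
  have := Real.sigmoid_le_one (μ * (x - θ))
  have := Real.sigmoid_nonneg (μ * (x - θ))
  have : 0 ≤ 1 - Real.sigmoid (μ * (x - θ)) := by linarith
  positivity

theorem deriv_sigmoid_le {μ : ℝ} (hμ : 0 ≤ μ) (θ x : ℝ) : deriv (sigmoid μ θ) x ≤ μ / 4 := by
  rw [(hasDerivAt_sigmoid μ θ x).deriv]
  have : Real.sigmoid (μ * (x - θ)) * (1 - Real.sigmoid (μ * (x - θ))) ≤ 1 / 4 := by
    nlinarith [sq_nonneg (Real.sigmoid (μ * (x - θ)) - 1 / 2)]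
  nlinarith

theorem sigmoid_monotone {μ : ℝ} (hμ : 0 ≤ μ) (θ : ℝ) : Monotone (sigmoid μ θ) :=
  monotone_of_deriv_nonneg (fun x => (hasDerivAt_sigmoid μ θ x).differentiableAt)
    (deriv_sigmoid_nonneg hμ θ)

theorem sigmoid_sub_le {μ : ℝ} (hμ : 0 ≤ μ) (θ : ℝ) {x y : ℝ} (hxy : x ≤ y) :
    sigmoid μ θ y - sigmoid μ θ x ≤ μ / 4 * (y - x) :=
  image_sub_le_mul_sub_of_deriv_le (fun x => (hasDerivAt_sigmoid μ θ x).differentiableAt)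
    (deriv_sigmoid_le hμ θ) hxy

theorem sigmoid_one_sub (μ θ x : ℝ) : sigmoid μ (1 - θ) (1 - x) = 1 - sigmoid μ θ x := by
  rw [sigmoid_eq, sigmoid_eq, ← Real.sigmoid_neg]
  ring_nf

theorem deriv_sigmoid_one_sub (μ θ x : ℝ) :
    deriv (sigmoid μ (1 - θ)) (1 - x) = deriv (sigmoid μ θ) x := by
  rw [(hasDerivAt_sigmoid μ _ _).deriv, (hasDerivAt_sigmoid μ θ x).deriv,
    show μ * (1 - x - (1 - θ)) = -(μ * (x - θ)) by ring, Real.sigmoid_neg]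
  ring

theorem Nfun_one_sub (μ θ p q u v w : ℝ) :
    Nfun μ (1 - θ) p q (1 - u) (1 - v) (1 - w) = -Nfun μ θ p q u v w := by
  simp only [Nfun, sigmoid_one_sub, deriv_sigmoid_one_sub]
  ring

theorem Nfun_le_of_fixedPoint {μ θ p q b E u v w : ℝ} (hμ : 0 ≤ μ) (hp : 0 ≤ p) (hq : 0 ≤ q)
    (hpq : p + q ≤ 1) (hb : sigmoid μ θ b = b) (hE : 0 ≤ E)
    (hu : u ≤ b + E) (hv : b ≤ v) (hw : w ≤ b + E) :
    Nfun μ θ p q u v w ≤ μ / 4 * E := by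
  have hS : ∀ x ≤ b + E, sigmoid μ θ x - v ≤ μ / 4 * E := fun x hx => by
    have := sigmoid_monotone hμ θ hx
    have := sigmoid_sub_le hμ θ (le_add_of_nonneg_right hE : b ≤ b + E)
    simp only [hb, add_sub_cancel_left] at this
    linarith
  have hdiff : u - sigmoid μ θ v ≤ E := by
    have := sigmoid_monotone hμ θ hv
    linarith
  have hmid : deriv (sigmoid μ θ) v * (u - sigmoid μ θ v) ≤ μ / 4 * E := by
    rcases le_total 0 (u - sigmoid μ θ v) with h | h
    · exact mul_le_mul (deriv_sigmoid_le hμ θ v) hdiff h (by positivity)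
    · nlinarith [deriv_sigmoid_nonneg hμ θ v]
  unfold Nfun
  nlinarith [mul_le_mul_of_nonneg_left (hS u hu) (by linarith : 0 ≤ 1 - p - q),
    mul_le_mul_of_nonneg_left hmid hp, mul_le_mul_of_nonneg_left (hS w hw) hq]

theorem le_add_mul_of_deriv_le_of_lt {f f' : ℝ → ℝ} {s t c r : ℝ} (hst : s ≤ t)
    (hf : ContinuousOn f (Icc s t)) (hf' : ∀ u ∈ Ioo s t, HasDerivAt f (f' u) u)
    (hs : f s ≤ c) (hr : 0 ≤ r) (hbound : ∀ u ∈ Ioo s t, c < f u → f' u ≤ r) :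
    f t ≤ c + r * (t - s) := by
  -- Run the mean value theorem from the last time `s₁` at which `f ≤ c`.
  set A := Icc s t ∩ f ⁻¹' Iic c
  have hAbdd : BddAbove A := ⟨t, fun u hu => hu.1.2⟩
  obtain ⟨⟨hss₁, hs₁t⟩, hfs₁⟩ : sSup A ∈ A :=
    (hf.preimage_isClosed_of_isClosed isClosed_Icc isClosed_Iic).csSup_mem
      ⟨s, ⟨le_rfl, hst⟩, hs⟩ hAbdd
  set s₁ := sSup A
  have habove : ∀ u ∈ Ioo s₁ t, c < f u := fun u hu => by
    by_contra! h
    exact hu.1.not_ge (le_csSup hAbdd ⟨⟨hss₁.trans hu.1.le, hu.2.le⟩, h⟩)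
  have hsub : Ioo s₁ t ⊆ Ioo s t := Ioo_subset_Ioo_left hss₁
  have hmvt : f t - f s₁ ≤ r * (t - s₁) := by
    refine (convex_Icc s₁ t).image_sub_le_mul_sub_of_deriv_le
      (hf.mono (Icc_subset_Icc_left hss₁)) ?_ ?_ _ ⟨le_rfl, hs₁t⟩ _ ⟨hs₁t, le_rfl⟩ hs₁t
    · rw [interior_Icc]
      exact fun u hu => (hf' u (hsub hu)).differentiableAt.differentiableWithinAt
    · rw [interior_Icc]
      intro u hu
      rw [(hf' u (hsub hu)).deriv]
      exact hbound u (hsub hu) (habove u hu)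
  have : r * (t - s₁) ≤ r * (t - s) := mul_le_mul_of_nonneg_left (by linarith) hr
  have : f s₁ ≤ c := hfs₁
  linarith

section Comparison

variable {ι : Type*} {v v' : ℝ → ι → ℝ} {b K : ℝ}

theorem le_add_mul_on_window {t₀ T E : ℝ} (ht₀ : 0 ≤ t₀) (hK : 0 ≤ K) (hE : 0 ≤ E)
    (hv : ∀ j, ∀ t ∈ Ici (0 : ℝ), HasDerivWithinAt (fun s => v s j) (v' t j) (Ici 0) t)
    (hv'_le : ∀ t > 0, ∀ E ≥ 0, (∀ k, v t k ≤ b + E) → ∀ j, b < v t j → v' t j ≤ K * E)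
    (hstart : ∀ j, v t₀ j ≤ b) (hwindow : ∀ t ∈ Icc t₀ (t₀ + T), ∀ j, v t j ≤ b + E) :
    ∀ t ∈ Icc t₀ (t₀ + T), ∀ j, v t j ≤ b + K * T * E := by
  intro t ht j
  have hsub : Icc t₀ t ⊆ Ici 0 := fun u hu => ht₀.trans hu.1
  have hpos : ∀ u ∈ Ioo t₀ t, 0 < u := fun u hu => ht₀.trans_lt hu.1
  have key := le_add_mul_of_deriv_le_of_lt (f := fun s => v s j) (c := b) (r := K * E) ht.1
    (fun u hu => (hv j u (hsub hu)).continuousWithinAt.mono hsub)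
    (fun u hu => (hv j u (hpos u hu).le).hasDerivAt (Ici_mem_nhds (hpos u hu)))
    (hstart j) (by positivity)
    (fun u hu => hv'_le u (hpos u hu) E hE
      (hwindow u ⟨hu.1.le, hu.2.le.trans ht.2⟩) j)
  have := mul_le_mul_of_nonneg_left (show t - t₀ ≤ T by linarith [ht.2]) (mul_nonneg hK hE)
  linarith

theorem le_on_window {t₀ T E : ℝ} (ht₀ : 0 ≤ t₀) (hK : 0 ≤ K) (hT : 0 ≤ T) (hKT : K * T < 1)
    (hE : 0 ≤ E)
    (hv : ∀ j, ∀ t ∈ Ici (0 : ℝ), HasDerivWithinAt (fun s => v s j) (v' t j) (Ici 0) t)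
    (hv'_le : ∀ t > 0, ∀ E ≥ 0, (∀ k, v t k ≤ b + E) → ∀ j, b < v t j → v' t j ≤ K * E)
    (hstart : ∀ j, v t₀ j ≤ b) (hwindow : ∀ t ∈ Icc t₀ (t₀ + T), ∀ j, v t j ≤ b + E) :
    ∀ t ∈ Icc t₀ (t₀ + T), ∀ j, v t j ≤ b := by
  have hiter : ∀ n : ℕ, ∀ t ∈ Icc t₀ (t₀ + T), ∀ j, v t j ≤ b + (K * T) ^ n * E := by
    intro n
    induction n with
    | zero => simpa using hwindow
    | succ n ih =>
      have := le_add_mul_on_window ht₀ hK (by positivity) hv hv'_le hstart ih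
      simpa only [pow_succ', mul_assoc] using this
  intro t ht j
  have hlim : Filter.Tendsto (fun n : ℕ => b + (K * T) ^ n * E) Filter.atTop (nhds b) := by
    simpa using tendsto_const_nhds.add
      ((tendsto_pow_atTop_nhds_zero_of_lt_one (by positivity) hKT).mul_const E)
  exact ge_of_tendsto' hlim fun n => hiter n t ht j

theorem le_of_deriv_le_above {M : ℝ} (hK : 0 ≤ K)
    (hv : ∀ j, ∀ t ∈ Ici (0 : ℝ), HasDerivWithinAt (fun s => v s j) (v' t j) (Ici 0) t)
    (hv'_le : ∀ t > 0, ∀ E ≥ 0, (∀ k, v t k ≤ b + E) → ∀ j, b < v t j → v' t j ≤ K * E)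
    (hbdd : ∀ t ≥ 0, ∀ j, v t j ≤ M) (hinit : ∀ j, v 0 j ≤ b) :
    ∀ t ≥ 0, ∀ j, v t j ≤ b := by
  set T := 1 / (K + 1)
  have hT : 0 < T := by positivity
  have hKT : K * T < 1 := by
    rw [mul_one_div, div_lt_one (by positivity)]
    linarith
  have hwindows : ∀ n : ℕ, ∀ t ∈ Icc 0 (n * T), ∀ j, v t j ≤ b := by
    intro n
    induction n with
    | zero =>
      intro t ht
      simpa [le_antisymm ht.2 (by simpa using ht.1)] using hinit
    | succ n ih =>
      intro t ht
      rcases le_total t (n * T) with h | h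
      · exact ih t ⟨ht.1, h⟩
      have hnT : 0 ≤ n * T := by positivity
      refine le_on_window hnT hK hT.le hKT (le_max_right (M - b) 0) hv hv'_le
        (ih _ ⟨hnT, le_rfl⟩) (fun u hu j => ?_) t ⟨h, by push_cast at ht; linarith [ht.2]⟩
      linarith [hbdd u (hnT.trans hu.1) j, le_max_left (M - b) 0]
  intro t ht
  obtain ⟨n, hn⟩ := exists_nat_ge (t / T)
  exact hwindows n t ⟨ht, by rwa [div_le_iff₀ hT] at hn⟩

end Comparison

theorem Nfun_solution_le_fixedPoint {μ θ p q b M : ℝ} (hμ : 0 ≤ μ) (hp : 0 ≤ p) (hq : 0 ≤ q)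
    (hpq : p + q ≤ 1) (hb : sigmoid μ θ b = b) {v v' : ℝ → ℤ → ℝ}
    (hv : ∀ j, ∀ t ∈ Ici (0 : ℝ), HasDerivWithinAt (fun s => v s j) (v' t j) (Ici 0) t)
    (hbdd : ∀ t ≥ 0, ∀ j, v t j ≤ M)
    (heq : ∀ t > 0, ∀ j, v' t j = Nfun μ θ p q (v t (j - 1)) (v t j) (v t (j + 1)))
    (hinit : ∀ j, v 0 j ≤ b) :
    ∀ t ≥ 0, ∀ j, v t j ≤ b :=
  le_of_deriv_le_above (by positivity : 0 ≤ μ / 4) hv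
    (fun t ht E hE hle j hbv => (heq t ht j).trans_le <|
      Nfun_le_of_fixedPoint hμ hp hq hpq hb hE (hle _) hbv.le (hle _))
    hbdd hinit

theorem stmt_19_general (μ θ p q : ℝ) (hμ : 0 < μ)
    (hp : 0 ≤ p) (hq0 : 0 ≤ q) (hpq : p + q ≤ 1)
    (a b : ℝ) (ha : sigmoid μ θ a = a) (hb : sigmoid μ θ b = b)
    (v v' : ℝ → ℤ → ℝ)
    -- componentwise continuously differentiable on [0,∞)
    (hv : ∀ j : ℤ, ∀ t ∈ Set.Ici (0 : ℝ),
      HasDerivWithinAt (fun s => v s j) (v' t j) (Set.Ici (0 : ℝ)) t)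
    -- uniform bound
    (M : ℝ)
    (hbound : ∀ t ∈ Set.Ici (0 : ℝ), ∀ j : ℤ, |v t j| ≤ M)
    -- the lattice equation
    (heq : ∀ t > (0 : ℝ), ∀ j : ℤ,
      v' t j = Nfun μ θ p q (v t (j - 1)) (v t j) (v t (j + 1)))
    -- initial datum
    (hinit : ∀ j : ℤ, v 0 j ∈ Set.Icc a b) :
    ∀ t > (0 : ℝ), ∀ j : ℤ, v t j ∈ Set.Icc a b := by
  intro t ht j
  have hupper := Nfun_solution_le_fixedPoint hμ.le hp hq0 hpq hb hv
    (fun t ht j => (abs_le.1 (hbound t ht j)).2) heq (fun j => (hinit j).2)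
  have hlower := Nfun_solution_le_fixedPoint (θ := 1 - θ) (b := 1 - a) (M := 1 + M)
    (v := fun t j => 1 - v t j) (v' := fun t j => -v' t j) hμ.le hp hq0 hpq
    (by rw [sigmoid_one_sub, ha]) (fun j t ht => (hv j t ht).const_sub 1)
    (fun t ht j => by linarith [(abs_le.1 (hbound t ht j)).1])
    (fun t ht j => by simp only [Nfun_one_sub, heq t ht j])
    (fun j => by linarith [(hinit j).1])
  exact ⟨by linarith [hlower t ht.le j], hupper t ht.le j⟩

/-- Invariance of the interval between two stationary states on the
bi-infinite network. If `a ≤ b` are fixed points of `S` and `v` is a componentwise `C¹`,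
uniformly bounded solution of the lattice equation on `ℤ` with `v_j(0) ∈ [a,b]` for all
`j ∈ ℤ`, then `v_j(t) ∈ [a,b]` for all `t > 0` and `j ∈ ℤ`. -/
theorem stmt_19 (μ θ p q : ℝ) (hμ : 0 < μ) (hθ : 0 ≤ θ)
    (hp : 0 ≤ p) (hq0 : 0 ≤ q) (hq1 : q ≤ 1) (hpq : p + q ≤ 1)
    (a b : ℝ) (hab : a ≤ b) (ha : sigmoid μ θ a = a) (hb : sigmoid μ θ b = b)
    (v v' : ℝ → ℤ → ℝ)
    -- componentwise continuously differentiable on [0,∞)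
    (hv : ∀ j : ℤ, ∀ t ∈ Set.Ici (0 : ℝ),
      HasDerivWithinAt (fun s => v s j) (v' t j) (Set.Ici (0 : ℝ)) t)
    (hv' : ∀ j : ℤ, ContinuousOn (fun t => v' t j) (Set.Ici (0 : ℝ)))
    -- uniform bound
    (M : ℝ) (hM : 0 < M)
    (hbound : ∀ t ∈ Set.Ici (0 : ℝ), ∀ j : ℤ, |v t j| ≤ M)
    -- the lattice equation
    (heq : ∀ t > (0 : ℝ), ∀ j : ℤ,
      v' t j = Nfun μ θ p q (v t (j - 1)) (v t j) (v t (j + 1)))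
    -- initial datum
    (hinit : ∀ j : ℤ, v 0 j ∈ Set.Icc a b) :
    ∀ t > (0 : ℝ), ∀ j : ℤ, v t j ∈ Set.Icc a b :=
  stmt_19_general μ θ p q hμ hp hq0 hpq a b ha hb v v' hv M hbound heq hinit
end
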